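/- arXiv:1711.01806 — 8 statements merged into one kernel-verified Lean document; each statement's English description precedes it below -/
import Mathlib

section
/- Let G be a 2-terminal directed acyclic graph (TDAG) and let G' be obtained from G by deleting an edge (a,b) where a has outdegree at least 2 and b has indegree at least 2. Then G' is again a 2-terminal graph: every remaining edge lies on a simple directed s-t path in G'. -/
variable {V : Type*}

/-- `p` is a simple directed path in the edge relation `E`. -/
def IsDiPath (E : V → V → Prop) (p : List V) : Prop := p.Chain' E ∧ p.Nodup

/-- `p` is a simple directed path from `x` to `y`. -/
def PathFrom (E : V → V → Prop) (p : List V) (x y : V) : Prop :=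
  IsDiPath E p ∧ p.head? = some x ∧ p.getLast? = some y

/-- the edge `(a,b)` is traversed by the path `p`. -/
def EdgeOn (a b : V) (p : List V) : Prop := (a, b) ∈ p.zip p.tail

/-- directed reachability. -/
def Reach (E : V → V → Prop) : V → V → Prop := Relation.ReflTransGen E

/-- no directed cycles. -/
def Acyclic (E : V → V → Prop) : Prop := ∀ a b, E a b → ¬ Reach E b a

/-- 2-terminal graph (edge version): no self-loops, some `s`-`t` path exists and
every edge lies on a simple `s`-`t` path. -/
def TwoTerminalE (E : V → V → Prop) (s t : V) : Prop :=
  (∀ v, ¬ E v v) ∧ (∃ p, PathFrom E p s t) ∧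
  ∀ a b, E a b → ∃ p, PathFrom E p s t ∧ EdgeOn a b p

/-- 2-terminal graph (full version): no self-loops and every vertex and edge
lies on a simple `s`-`t` path. -/
def TwoTerminalF (E : V → V → Prop) (s t : V) : Prop :=
  (∀ v, ¬ E v v) ∧ (∀ v, ∃ p, PathFrom E p s t ∧ v ∈ p) ∧
  ∀ a b, E a b → ∃ p, PathFrom E p s t ∧ EdgeOn a b p

/-- `C` is an `s`-`t` edge cut. -/
def IsCut (E : V → V → Prop) (s t : V) (C : Set (V × V)) : Prop :=
  (∀ e ∈ C, E e.1 e.2) ∧ ¬ ∃ p, PathFrom (fun a b => E a b ∧ (a, b) ∉ C) p s t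

def IsMinCut (E : V → V → Prop) (s t : V) (C : Set (V × V)) : Prop :=
  IsCut E s t C ∧ ∀ C' ⊂ C, ¬ IsCut E s t C'

/-- `S` is parallel: contained in some minimal `s`-`t` cut. -/
def Parallel (E : V → V → Prop) (s t : V) (S : Set (V × V)) : Prop :=
  ∃ C, IsMinCut E s t C ∧ S ⊆ C

/-- `S` is serial: contained in a simple directed `s`-`t` path. -/
def Serial (E : V → V → Prop) (s t : V) (S : Set (V × V)) : Prop :=
  ∃ p, PathFrom E p s t ∧ ∀ e ∈ S, EdgeOn e.1 e.2 p

/-! Let `p` be an `s`-`t` path through the edge `(u,v)`. If `p` uses `(a,b)`, then `(u,v)` lies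
either before `a` or after `b` on `p`. In the first case, follow `p` up to `a` and continue along
an `s`-`t` path through an edge `(a,c)` with `c ≠ b`; in the second, reach `b` along an `s`-`t`
path through an edge `(d,b)` with `d ≠ a` and continue along `p`. Acyclicity makes the spliced walk
simple, and a simple path leaves `a` (enters `b`) along at most one edge, so it avoids `(a,b)`. -/

theorem List.Nodup.append_cons_inj {α : Type*} {l₁ l₂ m₁ m₂ : List α} {x : α}
    (hnd : (l₁ ++ x :: l₂).Nodup) (h : l₁ ++ x :: l₂ = m₁ ++ x :: m₂) : l₁ = m₁ ∧ l₂ = m₂ := by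
  induction l₁ generalizing m₁ <;> cases m₁ <;> grind

section EdgeOn

variable {u v x y z : V} {l l₁ l₂ : List V}

@[simp]
theorem edgeOn_cons_cons : EdgeOn u v (x :: y :: l) ↔ (u = x ∧ v = y) ∨ EdgeOn u v (y :: l) := by
  simp [EdgeOn, Prod.ext_iff]

theorem edgeOn_append_cons :
    EdgeOn u v (l₁ ++ x :: l₂) ↔ EdgeOn u v (l₁ ++ [x]) ∨ EdgeOn u v (x :: l₂) := by
  induction l₁ using List.twoStepInduction with
  | nil => simp [EdgeOn]
  | singleton => cases l₂ <;> simp [EdgeOn]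
  | cons_cons a b l _ ih => simp only [List.cons_append, edgeOn_cons_cons] at ih ⊢; grind

theorem edgeOn_iff_exists_append : EdgeOn u v l ↔ ∃ l₁ l₂, l = l₁ ++ u :: v :: l₂ := by
  induction l using List.twoStepInduction with
  | nil => simp [EdgeOn]
  | singleton => simp [EdgeOn, List.cons_eq_append_iff]
  | cons_cons a b l _ ih =>
    rw [edgeOn_cons_cons, ih]
    constructor
    · rintro (⟨rfl, rfl⟩ | ⟨l₁, l₂, h⟩)
      · exact ⟨[], l, rfl⟩
      · exact ⟨a :: l₁, l₂, by simp [h]⟩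
    · rintro ⟨_ | ⟨c, l₁⟩, l₂, h⟩
      · grind
      · exact Or.inr ⟨l₁, l₂, (List.cons_eq_cons.1 h).2⟩

theorem EdgeOn.right_eq_of_nodup (hl : l.Nodup) (hxy : EdgeOn x y l) (hxz : EdgeOn x z l) :
    y = z := by
  obtain ⟨l₁, l₂, rfl⟩ := edgeOn_iff_exists_append.1 hxy
  obtain ⟨m₁, m₂, h⟩ := edgeOn_iff_exists_append.1 hxz
  exact (List.cons_eq_cons.1 (hl.append_cons_inj h).2).1

theorem EdgeOn.left_eq_of_nodup (hl : l.Nodup) (hxz : EdgeOn x z l) (hyz : EdgeOn y z l) :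
    x = y := by
  obtain ⟨l₁, l₂, rfl⟩ := edgeOn_iff_exists_append.1 hxz
  obtain ⟨m₁, m₂, h⟩ := edgeOn_iff_exists_append.1 hyz
  rw [List.append_cons l₁, List.append_cons m₁] at h
  rw [List.append_cons l₁] at hl
  exact List.singleton_inj.1 (List.append_inj' (hl.append_cons_inj h).1 rfl).2

end EdgeOn

section Paths

variable {E F : V → V → Prop} {p l₁ l₂ m₁ m₂ : List V} {s t s' t' x : V}

theorem Acyclic.nodup (hE : Acyclic E) (hp : p.IsChain E) : p.Nodup := by
  have hpw : p.Pairwise (Relation.TransGen E) :=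
    List.isChain_iff_pairwise.1 (List.IsChain.imp (fun _ _ => .single) hp)
  refine hpw.imp fun hxy heq => ?_
  subst heq
  obtain ⟨z, hxz, hzx⟩ := Relation.TransGen.head'_iff.1 hxy
  exact hE _ _ hxz hzx

theorem PathFrom.mono (hp : PathFrom E p s t) (h : ∀ u v, EdgeOn u v p → E u v → F u v) :
    PathFrom F p s t := by
  refine ⟨⟨List.isChain_iff_forall_rel_of_append_cons_cons.2 fun u v l₁ l₂ hl => ?_, hp.1.2⟩,
    hp.2⟩
  exact h u v (edgeOn_iff_exists_append.2 ⟨l₁, l₂, hl⟩)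
    (List.isChain_iff_forall_rel_of_append_cons_cons.1 hp.1.1 hl)

theorem PathFrom.splice (hE : Acyclic E) (hp : PathFrom E (l₁ ++ x :: l₂) s t)
    (hq : PathFrom E (m₁ ++ x :: m₂) s' t') : PathFrom E (l₁ ++ x :: m₂) s t' := by
  obtain ⟨⟨hpE, -⟩, hps, -⟩ := hp
  obtain ⟨⟨hqE, -⟩, -, hqt⟩ := hq
  have hE' : (l₁ ++ x :: m₂).IsChain E :=
    List.isChain_split.2 ⟨(List.isChain_split.1 hpE).1, (List.isChain_split.1 hqE).2⟩
  refine ⟨⟨hE', hE.nodup hE'⟩, ?_, ?_⟩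
  · cases l₁ <;> simpa using hps
  · rwa [List.getLast?_append_cons, ← List.getLast?_append_cons m₁]

end Paths

section Reroute

variable {E : V → V → Prop} {q l₁ l₂ : List V} {s t a b c d u v : V}

theorem exists_reroute_of_edgeOn_prefix (hE : Acyclic E) (hp : PathFrom E (l₁ ++ a :: l₂) s t)
    (huv : EdgeOn u v (l₁ ++ [a])) (hq : PathFrom E q s t) (hac : EdgeOn a c q) (hcb : c ≠ b) :
    ∃ p, PathFrom E p s t ∧ EdgeOn u v p ∧ ¬EdgeOn a b p := by
  obtain ⟨q₁, q₂, rfl⟩ := edgeOn_iff_exists_append.1 hac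
  have hr := hp.splice hE hq
  refine ⟨_, hr, edgeOn_append_cons.2 (Or.inl huv), fun hab => hcb ?_⟩
  exact EdgeOn.right_eq_of_nodup hr.1.2 (edgeOn_iff_exists_append.2 ⟨l₁, q₂, rfl⟩) hab

theorem exists_reroute_of_edgeOn_suffix (hE : Acyclic E) (hp : PathFrom E (l₁ ++ b :: l₂) s t)
    (huv : EdgeOn u v (b :: l₂)) (hq : PathFrom E q s t) (hdb : EdgeOn d b q) (hda : d ≠ a) :
    ∃ p, PathFrom E p s t ∧ EdgeOn u v p ∧ ¬EdgeOn a b p := by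
  obtain ⟨q₁, q₂, rfl⟩ := edgeOn_iff_exists_append.1 hdb
  rw [List.append_cons q₁] at hq
  have hr := hq.splice hE hp
  refine ⟨_, hr, edgeOn_append_cons.2 (Or.inr huv), fun hab => hda ?_⟩
  refine EdgeOn.left_eq_of_nodup hr.1.2 (edgeOn_iff_exists_append.2 ⟨q₁, l₂, ?_⟩) hab
  simp

end Reroute

theorem stmt3_general {V : Type*} (E : V → V → Prop) (s t a b : V)
    (hG : TwoTerminalF E s t) (hacyc : Acyclic E)
    (hout : ∃ c, c ≠ b ∧ E a c) (hin : ∃ c, c ≠ a ∧ E c b) :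
    ∀ u v, (E u v ∧ ¬(u = a ∧ v = b)) →
      ∃ p, PathFrom (fun x y => E x y ∧ ¬(x = a ∧ y = b)) p s t ∧ EdgeOn u v p := by
  obtain ⟨-, -, hedge⟩ := hG
  rintro u v ⟨huv, hne⟩
  suffices ∃ p, PathFrom E p s t ∧ EdgeOn u v p ∧ ¬EdgeOn a b p by
    obtain ⟨p, hp, hpuv, hpab⟩ := this
    exact ⟨p, hp.mono fun x y hxy hxy' => ⟨hxy', fun ⟨hx, hy⟩ => hpab (hx ▸ hy ▸ hxy)⟩, hpuv⟩
  obtain ⟨p, hp, hpuv⟩ := hedge u v huv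
  by_cases hpab : EdgeOn a b p
  case neg => exact ⟨p, hp, hpuv, hpab⟩
  obtain ⟨l₁, l₂, rfl⟩ := edgeOn_iff_exists_append.1 hpab
  rcases edgeOn_append_cons.1 hpuv with hpre | hsuf
  · obtain ⟨c, hcb, hac⟩ := hout
    obtain ⟨q, hq, hqac⟩ := hedge a c hac
    exact exists_reroute_of_edgeOn_prefix hacyc hp hpre hq hqac hcb
  · obtain ⟨d, hda, hdb⟩ := hin
    obtain ⟨q, hq, hqdb⟩ := hedge d b hdb
    have hsuf : EdgeOn u v (b :: l₂) := (edgeOn_cons_cons.1 hsuf).resolve_left hne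
    have hp' : PathFrom E ((l₁ ++ [a]) ++ b :: l₂) s t := by simpa using hp
    exact exists_reroute_of_edgeOn_suffix hacyc hp' hsuf hq hqdb hda

/-- Deleting from a TDAG an edge `(a,b)` with outdeg(a) ≥ 2 and indeg(b) ≥ 2 yields a
graph in which every remaining edge lies on a simple `s`-`t` path. -/
theorem stmt3 {V : Type*} (E : V → V → Prop) (s t a b : V)
    (hG : TwoTerminalF E s t) (hacyc : Acyclic E) (hab : E a b)
    (hout : ∃ c, c ≠ b ∧ E a c) (hin : ∃ c, c ≠ a ∧ E c b) :
    ∀ u v, (E u v ∧ ¬(u = a ∧ v = b)) →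
      ∃ p, PathFrom (fun x y => E x y ∧ ¬(x = a ∧ y = b)) p s t ∧ EdgeOn u v p :=
  stmt3_general E s t a b hG hacyc hout hin
end

section
/- Let G' be a 2-terminal directed graph and let G be obtained from G' by adding an edge (a,b) such that G' has no directed path from b to a. Then G is a 2-terminal directed graph: every edge and vertex of G lies on a simple directed s-t path. -/
variable {V : Type*}

/-!
A simple `s`-`t` path through the new edge `(a,b)` is obtained by following a path of `G'` from
`s` to `a`, the new edge, and a path of `G'` from `b` to `t`. These two pieces are vertex-disjoint:
a common vertex `v` would give `b ⇝ v ⇝ a` in `G'`. The same observation with `v = a = b` rules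
out the new edge being a loop.
-/

open Relation

lemma edgeOn_append_cons_cons (a b : V) (w : List V) :
    ∀ u : List V, EdgeOn a b (u ++ a :: b :: w)
  | [] => by simp [EdgeOn]
  | c :: u => by
    have ih := edgeOn_append_cons_cons a b w u
    unfold EdgeOn at ih ⊢
    obtain ⟨d, m, hdm⟩ := List.exists_cons_of_ne_nil (by simp : u ++ a :: b :: w ≠ [])
    rw [hdm] at ih
    simpa only [List.cons_append, hdm, List.tail_cons, List.zip_cons_cons] using
      List.mem_cons_of_mem _ ih

lemma edgeOn_append {a b : V} {p q : List V} (hp : p.getLast? = some a) (hq : q.head? = some b) :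
    EdgeOn a b (p ++ q) := by
  obtain ⟨u, rfl⟩ := List.getLast?_eq_some_iff.mp hp
  obtain ⟨w, rfl⟩ := List.head?_eq_some_iff.mp hq
  simpa using edgeOn_append_cons_cons a b w u

namespace PathFrom

variable {E F : V → V → Prop} {p q : List V} {x y z v : V}

lemma mono_s5 (hEF : ∀ ⦃u w⦄, E u w → F u w) (hp : PathFrom E p x y) : PathFrom F p x y :=
  ⟨⟨hp.1.1.imp hEF, hp.1.2⟩, hp.2⟩

lemma reach_from_start (hp : PathFrom E p x y) (hv : v ∈ p) : Reach E x v :=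
  hp.1.1.induction (ReflTransGen E x ·) p (fun _ _ h hx => hx.tail h)
    (fun hne => by rw [(List.head_eq_iff_head?_eq_some hne).mpr hp.2.1]) v hv

lemma reach_to_end (hp : PathFrom E p x y) (hv : v ∈ p) : Reach E v y :=
  hp.1.1.backwards_induction (ReflTransGen E · y) p (fun _ _ h hy => hy.head h)
    (fun hne => by rw [(List.getLast_eq_iff_getLast?_eq_some hne).mpr hp.2.2]) v hv

lemma exists_prefix (hp : PathFrom E p x y) (hv : v ∈ p) : ∃ q, PathFrom E q x v := by
  obtain ⟨u, w, rfl⟩ := List.append_of_mem hv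
  have hsplit : u ++ v :: w = (u ++ [v]) ++ w := by simp
  obtain ⟨⟨hchain, hnodup⟩, hx, -⟩ := hp
  rw [hsplit] at hchain hnodup hx
  refine ⟨u ++ [v], ⟨hchain.left_of_append, (List.nodup_append.mp hnodup).1⟩, ?_, by simp⟩
  cases u <;> simp_all

lemma exists_suffix (hp : PathFrom E p x y) (hv : v ∈ p) : ∃ q, PathFrom E q v y := by
  obtain ⟨u, w, rfl⟩ := List.append_of_mem hv
  obtain ⟨⟨hchain, hnodup⟩, -, hy⟩ := hp
  refine ⟨v :: w, ⟨hchain.right_of_append, (List.nodup_append.mp hnodup).2.1⟩, rfl, ?_⟩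
  simpa [List.getLast?_append] using hy

lemma append (hp : PathFrom E p x v) (hq : PathFrom E q y z) (hvy : E v y)
    (hdisj : p.Disjoint q) : PathFrom E (p ++ q) x z := by
  obtain ⟨⟨hpc, hpn⟩, hpx, hpv⟩ := hp
  obtain ⟨⟨hqc, hqn⟩, hqy, hqv⟩ := hq
  refine ⟨⟨hpc.append hqc ?_, List.nodup_append'.mpr ⟨hpn, hqn, hdisj⟩⟩, ?_, ?_⟩
  · simp_all
  · cases p <;> simp_all
  · simp_all [List.getLast?_append]

end PathFrom

/-- Adding an edge `(a,b)` to a 2-terminal directed graph, when there is no directed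
path from `b` to `a`, yields a 2-terminal directed graph. -/
theorem stmt5 {V : Type*} (E : V → V → Prop) (s t a b : V)
    (hG : TwoTerminalF E s t) (hba : ¬ Reach E b a) :
    TwoTerminalF (fun u v => E u v ∨ (u = a ∧ v = b)) s t := by
  obtain ⟨hloop, hvert, hedge⟩ := hG
  have hE : ∀ ⦃u v⦄, E u v → E u v ∨ (u = a ∧ v = b) := fun _ _ => Or.inl
  refine ⟨?_, fun v => ?_, ?_⟩
  · rintro v (h | ⟨rfl, rfl⟩)
    exacts [hloop v h, hba .refl]
  · obtain ⟨p, hp, hv⟩ := hvert v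
    exact ⟨p, hp.mono_s5 hE, hv⟩
  · rintro u v (h | ⟨rfl, rfl⟩)
    · obtain ⟨p, hp, he⟩ := hedge u v h
      exact ⟨p, hp.mono_s5 hE, he⟩
    · obtain ⟨q₁, hq₁⟩ := (hvert u).elim fun _ h => h.1.exists_prefix h.2
      obtain ⟨q₂, hq₂⟩ := (hvert v).elim fun _ h => h.1.exists_suffix h.2
      have hdisj : q₁.Disjoint q₂ := fun w hw₁ hw₂ =>
        hba ((hq₂.reach_from_start hw₂).trans (hq₁.reach_to_end hw₁))
      exact ⟨q₁ ++ q₂, (hq₁.mono_s5 hE).append (hq₂.mono_s5 hE) (.inr ⟨rfl, rfl⟩) hdisj,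
        edgeOn_append hq₁.2.2 hq₂.2.1⟩
end

section
/- If G and G' are directed graphs differing by a single forward split of vertex a into an edge (a,b) (a retains all incoming edges, the outgoing edges are partitioned between a and b), then for every directed path from x to y in G' there is a directed path from x to y in G, and conversely for every directed path from x to y in G with x ≠ b there is a directed path from x to y in G'. In particular, the split creates no new directed cycles. -/
variable {V : Type*}

/-- Forward split of node `a` into `a, b` with new edge `(a,b)`: `a` keeps all incoming
edges, `b` takes the outgoing edges in `Out` (nonempty), `a` keeps the rest.
`b` must be a fresh (isolated) vertex of the original graph `E`; `E₂` is the result. -/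
def ForwardSplit (E E₂ : V → V → Prop) (a b : V) (Out : Set V) : Prop :=
  (∀ v, ¬ E b v ∧ ¬ E v b) ∧ a ≠ b ∧ Out.Nonempty ∧ (∀ v ∈ Out, E a v) ∧ b ∉ Out ∧
  ∀ u v, E₂ u v ↔ ((u = a ∧ v = b) ∨ (u = b ∧ v ∈ Out) ∨
    (u = a ∧ v ∉ Out ∧ v ≠ b ∧ E a v) ∨ (u ≠ a ∧ u ≠ b ∧ v ≠ b ∧ E u v))

/-- Backward split of node `b` into `a, b` with new edge `(a,b)`: `b` keeps all outgoing
edges, `a` takes the incoming edges in `In` (nonempty), `b` keeps the rest.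
`a` must be a fresh (isolated) vertex of the original graph `E`; `E₂` is the result. -/
def BackwardSplit (E E₂ : V → V → Prop) (a b : V) (In : Set V) : Prop :=
  (∀ v, ¬ E a v ∧ ¬ E v a) ∧ a ≠ b ∧ In.Nonempty ∧ (∀ u ∈ In, E u b) ∧ a ∉ In ∧
  ∀ u v, E₂ u v ↔ ((u = a ∧ v = b) ∨ (u ∈ In ∧ v = a) ∨
    (u ∉ In ∧ u ≠ a ∧ v = b ∧ E u b) ∨ (u ≠ a ∧ v ≠ a ∧ v ≠ b ∧ E u v))

/-- Addition of a new edge `(a,b)` such that there is no path from `b` to `a`. -/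
def AddEdgeStep (E E₂ : V → V → Prop) : Prop :=
  ∃ a b, ¬ Reach E b a ∧ ∀ u v, E₂ u v ↔ (E u v ∨ (u = a ∧ v = b))

/-- A single d-embedding operation (for 2-terminal graphs with terminals `s`, `t`). -/
def DEmbedStep (s t : V) (E E₂ : V → V → Prop) : Prop :=
  AddEdgeStep E E₂ ∨ (∃ a b Out, a ≠ t ∧ ForwardSplit E E₂ a b Out) ∨
    (∃ a b In, b ≠ s ∧ BackwardSplit E E₂ a b In)

/-- `G'` is d-embedded in `G` if `G` is obtained from `G'` by a sequence of
d-embedding operations. -/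
def DEmbedded (s t : V) (E' E : V → V → Prop) : Prop :=
  Relation.ReflTransGen (DEmbedStep s t) E' E

/-- A forward split preserves reachability in both directions (away from the new
vertex `b`); in particular it creates no new directed cycles. -/
theorem stmt7 {V : Type*} (E E₂ : V → V → Prop) (a b : V) (Out : Set V)
    (hsplit : ForwardSplit E E₂ a b Out) :
    (∀ x y, Reach E x y → Reach E₂ x y) ∧
    (∀ x y, x ≠ b → y ≠ b → Reach E₂ x y → Reach E x y) ∧
    (Acyclic E → Acyclic E₂) := by
  obtain ⟨hbiso, hab, hOutne, hOutE, hbOut, hE2⟩ := hsplit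
  -- the retraction collapsing b to a
  classical
  set f : V → V := fun v => if v = b then a else v with hf
  have hfa : f a = a := by simp [hf, hab]
  have hfb : f b = a := by simp [hf]
  have hfne : ∀ v, v ≠ b → f v = v := by intro v hv; simp [hf, hv]
  have hstep2 : ∀ u v, E₂ u v → Reach E (f u) (f v) := by
    intro u v h
    rcases (hE2 u v).mp h with ⟨hu, hv⟩ | ⟨hu, hv⟩ | ⟨hu, hv1, hv2, hE⟩ |
      ⟨hu1, hu2, hv, hE⟩
    · rw [hu, hv, hfa, hfb]; exact Relation.ReflTransGen.refl
    · have hvb : v ≠ b := fun h => hbOut (h ▸ hv)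
      rw [hu, hfb, hfne v hvb]
      exact Relation.ReflTransGen.single (hOutE v hv)
    · rw [hu, hfa, hfne v hv2]
      exact Relation.ReflTransGen.single hE
    · rw [hfne u hu2, hfne v hv]
      exact Relation.ReflTransGen.single hE
  have hback : ∀ x y, Reach E₂ x y → Reach E (f x) (f y) := by
    intro x y h
    induction h with
    | refl => exact Relation.ReflTransGen.refl
    | tail _ he ih => exact ih.trans (hstep2 _ _ he)
  refine ⟨?_, ?_, ?_⟩
  · intro x y h
    induction h with
    | refl => exact Relation.ReflTransGen.refl
    | tail _ he ih =>
        rename_i u v _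
        refine ih.trans ?_
        have hub : u ≠ b := fun h => (hbiso v).1 (h ▸ he)
        have hvb : v ≠ b := fun h => (hbiso u).2 (h ▸ he)
        by_cases hua : u = a
        · by_cases hvO : v ∈ Out
          · have h1 : E₂ u b := (hE2 u b).mpr (Or.inl ⟨hua, rfl⟩)
            have h2 : E₂ b v := (hE2 b v).mpr (Or.inr (Or.inl ⟨rfl, hvO⟩))
            exact (Relation.ReflTransGen.single h1).tail h2
          · exact Relation.ReflTransGen.single
              ((hE2 u v).mpr (Or.inr (Or.inr (Or.inl ⟨hua, hvO, hvb, hua ▸ he⟩))))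
        · exact Relation.ReflTransGen.single
            ((hE2 u v).mpr (Or.inr (Or.inr (Or.inr ⟨hua, hub, hvb, he⟩))))
  · intro x y hx hy h
    have := hback x y h
    rwa [hfne x hx, hfne y hy] at this
  · intro hac u v he hr
    rcases (hE2 u v).mp he with ⟨hu, hv⟩ | ⟨hu, hv⟩ | ⟨hu, hv1, hv2, hE⟩ |
      ⟨hu1, hu2, hv, hE⟩
    · -- edge a → b, cycle through b
      rw [hu, hv] at hr
      rcases (Relation.ReflTransGen.cases_head hr) with hba | ⟨c, hbc, hca⟩
      · exact hab hba.symm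
      · rcases (hE2 b c).mp hbc with ⟨h1, _⟩ | ⟨_, hcO⟩ | ⟨h1, _⟩ | ⟨_, h1, _⟩
        · exact hab h1.symm
        · have hcb : c ≠ b := fun h => hbOut (h ▸ hcO)
          have := hback c a hca
          rw [hfne c hcb, hfa] at this
          exact hac a c (hOutE c hcO) this
        · exact hab h1.symm
        · exact h1 rfl
    · have hvb : v ≠ b := fun h => hbOut (h ▸ hv)
      have := hback v u hr
      rw [hfne v hvb, hu, hfb] at this
      exact hac a v (hOutE v hv) this
    · have := hback v u hr
      rw [hfne v hv2, hu, hfa] at this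
      exact hac a v hE this
    · have := hback v u hr
      rw [hfne v hv, hfne u hu2] at this
      exact hac u v hE this
end

section
/- Every parallel set of edges in a 2-terminal directed graph is concurrent: if S is contained in a minimal s-t cut, then for each edge e in S there is a simple s-t path meeting S exactly in e. -/
variable {V : Type*}

theorem isChain_iff_forall_edgeOn {E : V → V → Prop} :
    ∀ p : List V, p.IsChain E ↔ ∀ a b, EdgeOn a b p → E a b
  | [] => by simp [EdgeOn]
  | [a] => by simp [EdgeOn]
  | a :: b :: l => by
    simp only [List.isChain_cons_cons, isChain_iff_forall_edgeOn (b :: l), EdgeOn,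
      List.tail_cons, List.zip_cons_cons, List.mem_cons, Prod.mk.injEq]
    constructor
    · rintro ⟨hab, hrest⟩ x y (⟨rfl, rfl⟩ | hxy)
      exacts [hab, hrest x y hxy]
    · intro h
      exact ⟨h a b (.inl ⟨rfl, rfl⟩), fun x y hxy => h x y (.inr hxy)⟩

theorem isDiPath_iff {E : V → V → Prop} {p : List V} :
    IsDiPath E p ↔ (∀ a b, EdgeOn a b p → E a b) ∧ p.Nodup :=
  and_congr_left' (isChain_iff_forall_edgeOn p)

theorem pathFrom_avoiding_iff {E : V → V → Prop} {C : Set (V × V)} {p : List V} {x y : V} :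
    PathFrom (fun a b => E a b ∧ (a, b) ∉ C) p x y ↔
      PathFrom E p x y ∧ ∀ a b, EdgeOn a b p → (a, b) ∉ C := by
  simp only [PathFrom, isDiPath_iff]
  grind

/-- Removing `e` from a minimal cut reopens an `s`-`t` path, which then has to use `e` and
no other edge of the cut. -/
theorem IsMinCut.exists_pathFrom_inter_eq {E : V → V → Prop} {s t : V} {C : Set (V × V)}
    (hC : IsMinCut E s t C) {e : V × V} (he : e ∈ C) :
    ∃ p, PathFrom E p s t ∧ EdgeOn e.1 e.2 p ∧ ∀ f ∈ C, EdgeOn f.1 f.2 p → f = e := by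
  obtain ⟨⟨hCE, hCcut⟩, hmin⟩ := hC
  have hopen : ¬ IsCut E s t (C \ {e}) :=
    hmin _ (Set.sdiff_singleton_ssubset.mpr he)
  obtain ⟨p, hp, hpC⟩ : ∃ p, PathFrom E p s t ∧ ∀ a b, EdgeOn a b p → (a, b) ∉ C \ {e} := by
    simp only [IsCut, pathFrom_avoiding_iff, not_and, not_not] at hopen
    exact hopen fun f hf => hCE f hf.1
  have hep : EdgeOn e.1 e.2 p := by
    by_contra hne
    refine hCcut ⟨p, pathFrom_avoiding_iff.mpr ⟨hp, fun a b hab habC => hpC a b hab ⟨habC, ?_⟩⟩⟩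
    rintro rfl
    exact hne hab
  refine ⟨p, hp, hep, fun f hf hfp => ?_⟩
  by_contra hfe
  exact hpC f.1 f.2 hfp ⟨hf, hfe⟩

theorem stmt10_general {V : Type*} (E : V → V → Prop) (s t : V)
    (S : Set (V × V)) (hS : Parallel E s t S) :
    ∀ e ∈ S, ∃ p, PathFrom E p s t ∧ EdgeOn e.1 e.2 p ∧
      ∀ f ∈ S, EdgeOn f.1 f.2 p → f = e := by
  obtain ⟨C, hC, hSC⟩ := hS
  intro e he
  obtain ⟨p, hp, hep, hpC⟩ := hC.exists_pathFrom_inter_eq (hSC he)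
  exact ⟨p, hp, hep, fun f hf => hpC f (hSC hf)⟩

/-- Every parallel set is concurrent: for each `e ∈ S` there is a simple `s`-`t`
path meeting `S` exactly in `e`. -/
theorem stmt10 {V : Type*} (E : V → V → Prop) (s t : V)
    (hG : TwoTerminalE E s t) (S : Set (V × V)) (hS : Parallel E s t S) :
    ∀ e ∈ S, ∃ p, PathFrom E p s t ∧ EdgeOn e.1 e.2 p ∧
      ∀ f ∈ S, EdgeOn f.1 f.2 p → f = e :=
  stmt10_general E s t S hS
end

section
/- Let G' be a 2-terminal directed graph with a parallel set of edges S, and let G be obtained from G' by adding an edge (a,b) such that there is no path from b to a. Then S is still a parallel set in G (contained in some minimal s-t cut of G). -/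
variable {V : Type*}

/-- A parallel set remains parallel after adding an edge `(a,b)` with no path from
`b` to `a`. -/
theorem stmt11 {V : Type*} (E : V → V → Prop) (s t a b : V)
    (hG : TwoTerminalE E s t) (hba : ¬ Reach E b a)
    (S : Set (V × V)) (hS : Parallel E s t S) :
    Parallel (fun u v => E u v ∨ (u = a ∧ v = b)) s t S := by
  classical
  by_cases hab : E a b
  · have hE : (fun u v => E u v ∨ (u = a ∧ v = b)) = E := by
      funext u v
      apply propext
      constructor
      · rintro (h | ⟨rfl, rfl⟩)
        · exact h
        · exact hab
      · exact Or.inl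
    rw [hE]; exact hS
  · obtain ⟨C, ⟨⟨hCE, hCcut⟩, hCmin⟩, hSC⟩ := hS
    have hmono : ∀ {R R' : V → V → Prop} {p : List V} {x y : V},
        (∀ u v, R u v → R' u v) → PathFrom R p x y → PathFrom R' p x y := by
      rintro R R' p x y h ⟨⟨hc, hn⟩, h1, h2⟩
      exact ⟨⟨hc.imp h, hn⟩, h1, h2⟩
    by_cases hC : IsCut (fun u v => E u v ∨ (u = a ∧ v = b)) s t C
    · refine ⟨C, ⟨hC, ?_⟩, hSC⟩
      intro C' hC' hcut
      refine hCmin C' hC' ⟨fun e he => hCE e (hC'.1 he), ?_⟩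
      rintro ⟨p, hp⟩
      exact hcut.2 ⟨p, hmono (fun u v h => ⟨Or.inl h.1, h.2⟩) hp⟩
    · -- need to add the edge (a,b) to the cut
      refine ⟨insert (a, b) C, ⟨⟨?_, ?_⟩, ?_⟩, fun e he => Set.mem_insert_iff.2 (Or.inr (hSC he))⟩
      · rintro e he
        rcases Set.mem_insert_iff.1 he with h | h
        · subst h; exact Or.inr ⟨rfl, rfl⟩
        · exact Or.inl (hCE e h)
      · rintro ⟨p, hp⟩
        refine hCcut ⟨p, hmono ?_ hp⟩
        rintro u v ⟨h1 | ⟨rfl, rfl⟩, h2⟩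
        · exact ⟨h1, fun hm => h2 (Set.mem_insert_iff.2 (Or.inr hm))⟩
        · exact absurd (Set.mem_insert _ _) h2
      · intro D' hD' hcut
        by_cases hmem : (a, b) ∈ D'
        · -- D' contains (a,b); D' \ {(a,b)} is a proper subset of C
          set C'' : Set (V × V) := D' \ {(a, b)} with hC''
          have hsub : C'' ⊂ C := by
            constructor
            · rintro e ⟨he1, he2⟩
              rcases Set.mem_insert_iff.1 (hD'.1 he1) with h | h
              · exact absurd h he2
              · exact h
            · intro hCC
              refine hD'.2 ?_
              rintro e he
              rcases Set.mem_insert_iff.1 he with rfl | h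
              · exact hmem
              · rcases hCC h with ⟨h1, _⟩
                exact h1
          have hnotcut := hCmin C'' hsub
          have hfst : ∀ e ∈ C'', E e.1 e.2 := fun e he => hCE e (hsub.1 he)
          have hex : ∃ p, PathFrom (fun u v => E u v ∧ (u, v) ∉ C'') p s t := by
            by_contra hno
            exact hnotcut ⟨hfst, hno⟩
          obtain ⟨p, hp⟩ := hex
          refine hcut.2 ⟨p, hmono ?_ hp⟩
          rintro u v ⟨h1, h2⟩
          refine ⟨Or.inl h1, fun hm => h2 ⟨hm, ?_⟩⟩
          intro he
          simp only [Set.mem_singleton_iff, Prod.mk.injEq] at he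
          obtain ⟨rfl, rfl⟩ := he
          exact hab h1
        · -- D' ⊆ C
          have hsub : D' ⊆ C := by
            intro e he
            rcases Set.mem_insert_iff.1 (hD'.1 he) with rfl | h
            · exact absurd he hmem
            · exact h
          rcases eq_or_ssubset_of_subset hsub with rfl | hss
          · exact hC hcut
          · refine hCmin D' hss ⟨fun e he => hCE e (hsub he), ?_⟩
            rintro ⟨p, hp⟩
            exact hcut.2 ⟨p, hmono (fun u v h => ⟨Or.inl h.1, h.2⟩) hp⟩
end

section
/- For the k-serial-parallel graph G_{SP(k)}, the set {(s,b_1),(a_2,b_2),...,(a_{k-1},b_{k-1}),(a_k,t)} is both serial and parallel, and hence SPW(G_{SP(k)}) ≥ k. -/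
variable {V : Type*}

/-- The k-serial-parallel graph `G_{SP(k)}` on vertices `(false, i) = aᵢ₊₁`
(with `a₁ = s`) and `(true, i) = bᵢ₊₁` (with `b_k = t`), 0-indexed. -/
def SPGraph (k : ℕ) : (Bool × Fin k) → (Bool × Fin k) → Prop := fun u v =>
  (u.1 = false ∧ v.1 = false ∧ u.2.val = 0 ∧ 1 ≤ v.2.val) ∨
  (u.1 = false ∧ v.1 = true ∧ u.2 = v.2) ∨
  (u.1 = true ∧ v.1 = true ∧ u.2.val < k - 1 ∧ v.2.val = k - 1) ∨
  (u.1 = true ∧ v.1 = false ∧ v.2.val = u.2.val + 1)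

/-! The rungs `(aᵢ, bᵢ)` (with `a₁ = s`, `b_k = t`) all lie on the zigzag path
`s b₁ a₂ b₂ … a_k t`, so they are serial. They are the only edges from an `a`-vertex to a
`b`-vertex, so they form an `s`-`t` cut, and this cut is minimal because the path
`s aᵢ bᵢ t` meets it only in the rung `(aᵢ, bᵢ)`. -/

section Paths

variable {E E' : V → V → Prop} {p : List V} {x y : V}

lemma PathFrom.mono_s15 (hE : ∀ a b, E a b → E' a b) (hp : PathFrom E p x y) : PathFrom E' p x y :=
  ⟨⟨List.IsChain.imp hE hp.1.1, hp.1.2⟩, hp.2⟩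

lemma PathFrom.reach (hp : PathFrom E p x y) : Reach E x y := by
  obtain ⟨⟨hchain, -⟩, hhead, hlast⟩ := hp
  cases p with
  | nil => simp at hhead
  | cons a l =>
    obtain rfl : a = x := by simpa using hhead
    refine List.relationReflTransGen_of_exists_isChain_cons l hchain ?_
    rw [List.getLast?_eq_some_getLast (l := a :: l) (by simp)] at hlast
    exact Option.some_injective _ hlast

lemma edgeOn_getElem {j : ℕ} (hj : j + 1 < p.length) : EdgeOn p[j] p[j + 1] p := by
  rw [EdgeOn, List.mem_iff_getElem]
  exact ⟨j, by simp; omega, by rw [List.getElem_zip, List.getElem_tail]⟩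

end Paths

section Cuts

variable {E : V → V → Prop} {s t : V} {C : Set (V × V)}

lemma isCut_of_forall_leaving (P : V → Prop) (hC : ∀ e ∈ C, E e.1 e.2)
    (hs : P s) (ht : ¬ P t)
    (hleave : ∀ a b, E a b → P a → ¬ P b → (a, b) ∈ C) : IsCut E s t C := by
  have hside : ∀ v, Reach (fun a b => E a b ∧ (a, b) ∉ C) s v → P v := fun v hv => by
    induction hv with
    | refl => exact hs
    | tail _ hab ih => exact by_contra fun hb => hab.2 (hleave _ _ hab.1 ih hb)
  exact ⟨hC, fun ⟨p, hp⟩ => ht (hside t hp.reach)⟩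

lemma isMinCut_of_forall_exists_path (hC : IsCut E s t C)
    (hpath : ∀ e ∈ C,
      ∃ p, PathFrom (fun a b => E a b ∧ ((a, b) ∈ C → (a, b) = e)) p s t) :
    IsMinCut E s t C := by
  refine ⟨hC, fun C' hC' hcut => ?_⟩
  obtain ⟨e, heC, heC'⟩ := Set.exists_of_ssubset hC'
  obtain ⟨p, hp⟩ := hpath e heC
  refine hcut.2 ⟨p, hp.mono_s15 fun a b ⟨hab, hmem⟩ => ⟨hab, fun h => heC' ?_⟩⟩
  rwa [← hmem (hC'.1 h)]

end Cuts

section SPGraph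

variable {k : ℕ}

def spRungs (k : ℕ) : Set ((Bool × Fin k) × (Bool × Fin k)) :=
  {e | ∃ i : Fin k, e = ((false, i), (true, i))}

lemma mem_spRungs {u v : Bool × Fin k} :
    (u, v) ∈ spRungs k ↔ u.1 = false ∧ v.1 = true ∧ u.2 = v.2 := by
  constructor
  · rintro ⟨i, hi⟩
    simp_all [Prod.ext_iff]
  · rintro ⟨hu, hv, huv⟩
    exact ⟨u.2, by ext <;> simp_all⟩

def spRung (k : ℕ) : Fin k ↪ (Bool × Fin k) × (Bool × Fin k) :=
  ⟨fun i => ((false, i), (true, i)), fun _ _ h => congrArg (·.1.2) h⟩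

lemma coe_map_spRung : (Finset.univ.map (spRung k) : Set _) = spRungs k := by
  ext e
  simp only [Finset.coe_map, Finset.coe_univ, Set.image_univ, Set.mem_range]
  exact exists_congr fun _ => eq_comm

/-- The zigzag path `s = a₁, b₁, a₂, b₂, …, a_k, b_k = t`. -/
def spPath (k : ℕ) : List (Bool × Fin k) :=
  List.ofFn fun j : Fin (2 * k) => (decide (j.val % 2 = 1), ⟨j / 2, by omega⟩)

lemma spPath_pathFrom (hk : 0 < k) :
    PathFrom (SPGraph k) (spPath k) (false, ⟨0, hk⟩)
      (true, ⟨k - 1, Nat.sub_one_lt_of_lt hk⟩) := by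
  refine ⟨⟨List.isChain_ofFn.mpr fun j hj => ?_, List.nodup_ofFn.mpr fun i j hij => ?_⟩,
    ?_, ?_⟩
  · simp [SPGraph, Fin.ext_iff]
    omega
  · simp [Prod.ext_iff, Fin.ext_iff] at hij
    omega
  · simpa [spPath, List.head?_eq_getElem?] using hk
  · simp [spPath, List.getLast?_eq_getElem?]
    omega

lemma edgeOn_spPath (i : Fin k) : EdgeOn (false, i) (true, i) (spPath k) := by
  have h := edgeOn_getElem (p := spPath k) (j := 2 * i) (by simp [spPath]; omega)
  simpa [spPath, Nat.mul_add_div] using h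

lemma exists_pathFrom_through_rung (hk : 2 ≤ k) (i : Fin k) :
    ∃ p, PathFrom
      (fun a b => SPGraph k a b ∧ ((a, b) ∈ spRungs k → (a, b) = ((false, i), (true, i))))
      p (false, ⟨0, Nat.zero_lt_of_lt hk⟩) (true, ⟨k - 1, Nat.sub_one_lt_of_lt hk⟩) := by
  obtain hi | hi | hi : i.val = 0 ∨ i.val = k - 1 ∨ 0 < i.val ∧ i.val < k - 1 := by omega
  · refine ⟨[(false, ⟨0, by omega⟩), (true, i), (true, ⟨k - 1, by omega⟩)],
      ⟨⟨(?_ : List.IsChain _ _), ?_⟩, rfl, rfl⟩⟩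
    all_goals simp [SPGraph, mem_spRungs, Prod.ext_iff, Fin.ext_iff]; omega
  · refine ⟨[(false, ⟨0, by omega⟩), (false, i), (true, ⟨k - 1, by omega⟩)],
      ⟨⟨(?_ : List.IsChain _ _), ?_⟩, rfl, rfl⟩⟩
    all_goals simp [SPGraph, mem_spRungs, Prod.ext_iff, Fin.ext_iff]; omega
  · refine ⟨[(false, ⟨0, by omega⟩), (false, i), (true, i), (true, ⟨k - 1, by omega⟩)],
      ⟨⟨(?_ : List.IsChain _ _), ?_⟩, rfl, rfl⟩⟩
    all_goals simp [SPGraph, mem_spRungs, Prod.ext_iff, Fin.ext_iff]; omega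

lemma isMinCut_spRungs (hk : 2 ≤ k) :
    IsMinCut (SPGraph k) (false, ⟨0, Nat.zero_lt_of_lt hk⟩)
      (true, ⟨k - 1, Nat.sub_one_lt_of_lt hk⟩) (spRungs k) := by
  refine isMinCut_of_forall_exists_path
    (isCut_of_forall_leaving (fun v => v.1 = false) ?_ rfl (by simp) ?_) ?_
  · rintro _ ⟨i, rfl⟩
    exact Or.inr (Or.inl ⟨rfl, rfl, rfl⟩)
  · intro a b hab ha hb
    simp_all [SPGraph, mem_spRungs]
  · rintro _ ⟨i, rfl⟩
    exact exists_pathFrom_through_rung hk i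

end SPGraph

/-- In `G_{SP(k)}` the set `{(s,b₁),(a₂,b₂),…,(a_k,t)}` is both serial and parallel;
hence `SPW(G_{SP(k)}) ≥ k`. -/
theorem stmt15 (k : ℕ) (hk : 2 ≤ k) :
    let s : Bool × Fin k := (false, ⟨0, by omega⟩)
    let t : Bool × Fin k := (true, ⟨k - 1, by omega⟩)
    let S : Set ((Bool × Fin k) × (Bool × Fin k)) :=
      {e | ∃ i : Fin k, e = ((false, i), (true, i))}
    Serial (SPGraph k) s t S ∧ Parallel (SPGraph k) s t S ∧
      ∃ F : Finset ((Bool × Fin k) × (Bool × Fin k)),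
        ↑F = S ∧ k ≤ F.card := by
  intro s t S
  have hserial : Serial (SPGraph k) s t S :=
    ⟨spPath k, spPath_pathFrom (Nat.zero_lt_of_lt hk), fun _ ⟨i, he⟩ => he ▸ edgeOn_spPath i⟩
  have hparallel : Parallel (SPGraph k) s t S := ⟨spRungs k, isMinCut_spRungs hk, subset_rfl⟩
  exact ⟨hserial, hparallel, Finset.univ.map (spRung k), coe_map_spRung, by simp⟩
end

section
/- In a TDAG whose vertices are topologically ordered, a set S = {(a_1,b_1),...,(a_k,b_k)} of edges sorted so that a_1 ≤ a_2 ≤ ... ≤ a_k in topological order is serial (contained in a simple s-t path) if and only if there exist directed paths from s to a_1, from b_i to a_{i+1} for each i < k, and from b_k to t. -/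
/-!
The topological order strictly increases along edges, so every directed walk is a simple path
visiting its vertices in increasing order. On an `s`-`t` path through the edges of `S`, the edge
`(aᵢ₊₁, bᵢ₊₁)` therefore comes after `(aᵢ, bᵢ)`, and the segments of the path give the required
connections. Conversely, concatenating the connecting paths with the edges of `S` gives an `s`-`t`
walk through `S`, which is automatically simple.
-/

variable {V : Type*}

section
variable {E : V → V → Prop}

theorem edgeOn_iff_infix {a b : V} {p : List V} : EdgeOn a b p ↔ [a, b] <:+: p := by
  induction p with
  | nil => simp [EdgeOn]
  | cons x xs ih =>
    cases xs with
    | nil => simp [EdgeOn, List.infix_cons_iff]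
    | cons y ys =>
      simp only [EdgeOn, List.tail_cons] at ih
      simp [EdgeOn, List.infix_cons_iff, ← ih]

theorem EdgeOn.right_unique {a b b' : V} {p : List V} (hp : p.Nodup) (h : EdgeOn a b p)
    (h' : EdgeOn a b' p) : b = b' := by
  induction p with
  | nil => simp [EdgeOn] at h
  | cons x xs ih =>
    cases xs with
    | nil => simp [EdgeOn] at h
    | cons y ys =>
      simp only [EdgeOn, List.tail_cons, List.zip_cons_cons, List.mem_cons, Prod.mk.injEq]
        at h h' ih
      rw [List.nodup_cons] at hp
      rcases h with ⟨rfl, rfl⟩ | h <;> rcases h' with ⟨ha, rfl⟩ | h'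
      · rfl
      · exact absurd (List.of_mem_zip h').1 hp.1
      · exact absurd (ha ▸ (List.of_mem_zip h).1) hp.1
      · exact ih hp.2 h h'

theorem pairwise_reach_of_isChain {p : List V} (h : p.IsChain E) : p.Pairwise (Reach E) :=
  List.isChain_iff_pairwise (R := Relation.ReflTransGen E) |>.mp
    (h.imp fun _ _ => Relation.ReflTransGen.single)

theorem reach_of_head?_eq_of_mem {p : List V} {x z : V} (hp : p.IsChain E)
    (hx : p.head? = some x) (hz : z ∈ p) : Reach E x z := by
  obtain ⟨l, rfl⟩ := List.head?_eq_some_iff.mp hx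
  rcases List.mem_cons.mp hz with rfl | hz
  · exact Relation.ReflTransGen.refl
  · exact List.rel_of_pairwise_cons (pairwise_reach_of_isChain hp) hz

theorem reach_of_getLast?_eq_of_mem {p : List V} {y z : V} (hp : p.IsChain E)
    (hy : p.getLast? = some y) (hz : z ∈ p) : Reach E z y := by
  obtain ⟨l, rfl⟩ := List.getLast?_eq_some_iff.mp hy
  rcases List.mem_append.mp hz with hz | hz
  · exact List.pairwise_append.mp (pairwise_reach_of_isChain hp) |>.2.2 z hz y
      (List.mem_singleton_self y)
  · rw [List.mem_singleton.mp hz]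
    exact Relation.ReflTransGen.refl

section Order
variable {α : Type*} [Preorder α] {ord : V → α}

theorem le_of_reach (hord : ∀ u v, E u v → ord u < ord v) {x y : V} (h : Reach E x y) :
    ord x ≤ ord y := by
  induction h with
  | refl => exact le_rfl
  | tail _ e ih => exact ih.trans (hord _ _ e).le

theorem eq_of_reach_of_le (hord : ∀ u v, E u v → ord u < ord v) {x y : V} (h : Reach E x y)
    (hle : ord y ≤ ord x) : x = y := by
  rcases Relation.ReflTransGen.cases_head h with rfl | ⟨c, hxc, hcy⟩
  · rfl
  · exact absurd ((hord _ _ hxc).trans_le (le_of_reach hord hcy)) (not_lt_of_ge hle)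

theorem nodup_of_isChain (hord : ∀ u v, E u v → ord u < ord v) {p : List V}
    (hp : p.IsChain E) : p.Nodup :=
  have hlt : (p.map ord).IsChain (· < ·) := List.isChain_map ord |>.mpr (hp.imp hord)
  List.Nodup.of_map ord ((List.isChain_iff_pairwise.mp hlt).imp ne_of_lt)

theorem reach_of_edgeOn_of_edgeOn (hord : ∀ u v, E u v → ord u < ord v) {p : List V}
    (hp : p.IsChain E) {a b a' b' : V} (h : EdgeOn a b p) (h' : EdgeOn a' b' p)
    (hle : ord a ≤ ord a') (hne : (a, b) ≠ (a', b')) : Reach E b a' := by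
  obtain ⟨u, v, rfl⟩ := edgeOn_iff_infix.mp h
  -- If `a'` came no later than `a`, it would reach `a`, so `a' = a`, and a simple path leaves `a`
  -- only once.
  have ha' : a' ∈ (u ++ [a]) ++ (b :: v) := by
    simpa using (edgeOn_iff_infix.mp h').subset (by simp)
  rcases List.mem_append.mp ha' with ha' | ha'
  · have hu : (u ++ [a]).IsChain E := hp.prefix ⟨b :: v, by simp⟩
    obtain rfl := eq_of_reach_of_le hord (reach_of_getLast?_eq_of_mem hu (by simp) ha') hle
    exact absurd (by rw [h'.right_unique (nodup_of_isChain hord hp) h]) hne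
  · exact reach_of_head?_eq_of_mem (hp.suffix ⟨u ++ [a], by simp⟩) rfl ha'

end Order

def IsWalk (E : V → V → Prop) (p : List V) (x y : V) : Prop :=
  p.IsChain E ∧ p.head? = some x ∧ p.getLast? = some y

theorem IsWalk.concat {p : List V} {x y z : V} (hp : IsWalk E p x y) (e : E y z) :
    IsWalk E (p ++ [z]) x z := by
  obtain ⟨hc, hx, hy⟩ := hp
  refine ⟨hc.append (.singleton z) (by simpa [hy] using e), ?_, by simp⟩
  simp [List.head?_append, hx]

theorem IsWalk.exists_extend {p : List V} {x y z : V} (hp : IsWalk E p x y) (h : Reach E y z) :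
    ∃ q, IsWalk E q x z ∧ p <+: q := by
  induction h with
  | refl => exact ⟨p, hp, List.prefix_refl p⟩
  | tail _ e ih =>
    obtain ⟨q, hq, hpq⟩ := ih
    exact ⟨_, hq.concat e, hpq.trans (List.prefix_append _ _)⟩

theorem IsWalk.exists_extend_edge {p : List V} {x y a b : V} (hp : IsWalk E p x y)
    (hya : Reach E y a) (hab : E a b) : ∃ q, IsWalk E q x b ∧ p <+: q ∧ [a, b] <:+: q := by
  obtain ⟨q, hq, hpq⟩ := hp.exists_extend hya
  obtain ⟨l, rfl⟩ := List.getLast?_eq_some_iff.mp hq.2.2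
  exact ⟨_, hq.concat hab, hpq.trans (List.prefix_append _ _), ⟨l, [], by simp⟩⟩

theorem exists_walk_through_edges {n : ℕ} {s : V} {a b : Fin (n + 1) → V}
    (hE : ∀ i, E (a i) (b i)) (hs : Reach E s (a 0))
    (hgap : ∀ i : Fin n, Reach E (b i.castSucc) (a i.succ)) (i : Fin (n + 1)) :
    ∃ p, IsWalk E p s (b i) ∧ ∀ j ≤ i, [a j, b j] <:+: p := by
  induction i using Fin.induction with
  | zero =>
    obtain ⟨p, hp, -, hab⟩ := IsWalk.exists_extend_edge ⟨.singleton s, rfl, rfl⟩ hs (hE 0)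
    exact ⟨p, hp, fun j hj => by rwa [Fin.le_zero_iff.mp hj]⟩
  | succ i ih =>
    obtain ⟨p, hp, hcov⟩ := ih
    obtain ⟨q, hq, hpq, hab⟩ := hp.exists_extend_edge (hgap i) (hE i.succ)
    refine ⟨q, hq, fun j hj => ?_⟩
    rcases eq_or_ne j i.succ with rfl | hne
    · exact hab
    · exact (hcov j (Fin.le_castSucc_iff.mpr (lt_of_le_of_ne hj hne))).trans hpq.isInfix

end

/-- In a topologically ordered TDAG, a sorted set of edges `{(aᵢ,bᵢ)}` is serial iff
there are paths `s`–`a₁`, `bᵢ`–`aᵢ₊₁` for each `i < k`, and `b_k`–`t`. -/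
theorem stmt18 {V : Type*} (E : V → V → Prop) (s t : V)
    (ord : V → ℕ) (hord : ∀ u v, E u v → ord u < ord v)
    (k : ℕ) (hk : 0 < k) (a b : Fin k → V)
    (hinj : Function.Injective fun i => (a i, b i))
    (hE : ∀ i, E (a i) (b i))
    (hsorted : ∀ i j : Fin k, i ≤ j → ord (a i) ≤ ord (a j)) :
    Serial E s t {e | ∃ i, e = (a i, b i)} ↔
      (Reach E s (a ⟨0, hk⟩) ∧
        (∀ i : Fin k, ∀ h : i.val + 1 < k, Reach E (b i) (a ⟨i.val + 1, h⟩)) ∧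
        Reach E (b ⟨k - 1, by omega⟩) t) := by
  constructor
  · rintro ⟨p, ⟨⟨hc, -⟩, hs, ht⟩, hS⟩
    have hon : ∀ i, [a i, b i] <:+: p := fun i => edgeOn_iff_infix.mp (hS _ ⟨i, rfl⟩)
    refine ⟨reach_of_head?_eq_of_mem hc hs ((hon ⟨0, hk⟩).subset (by simp)), fun i h => ?_,
      reach_of_getLast?_eq_of_mem hc ht ((hon ⟨k - 1, by omega⟩).subset (by simp))⟩
    exact reach_of_edgeOn_of_edgeOn hord hc (hS _ ⟨i, rfl⟩) (hS _ ⟨⟨i + 1, h⟩, rfl⟩)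
      (hsorted _ _ (by simp [Fin.le_def])) (hinj.ne (by simp [Fin.ext_iff]))
  · rintro ⟨hs, hgap, ht⟩
    obtain ⟨n, rfl⟩ : ∃ n, k = n + 1 := ⟨k - 1, by omega⟩
    obtain ⟨p, hp, hcov⟩ := exists_walk_through_edges hE hs (fun i => hgap i.castSucc (by simp))
      (Fin.last n)
    obtain ⟨q, ⟨hq, hqs, hqt⟩, hpq⟩ := hp.exists_extend ht
    refine ⟨q, ⟨⟨hq, nodup_of_isChain hord hq⟩, hqs, hqt⟩, ?_⟩
    rintro _ ⟨i, rfl⟩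
    exact edgeOn_iff_infix.mpr ((hcov i (Fin.le_last i)).trans hpq.isInfix)
end

section
/- Deciding whether a given set of k edges in a 2-terminal directed graph is serial (contained in a simple directed s-t path) is NP-hard already for k=3; equivalently, the 2-vertex-disjoint-paths problem in directed graphs reduces to it: given a directed graph and vertices x_1,y_1,x_2,y_2, there exist vertex-disjoint directed paths x_1-y_1 and x_2-y_2 if and only if, in the augmented 2-terminal graph (add s with edges to all vertices, t with edges from all vertices, and the edge (y_1,x_2)), the set {(s,x_1),(y_1,x_2),(y_2,t)} is serial. -/
variable {V : Type*}

/-!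
Two vertex-disjoint paths `x₁ → y₁` and `x₂ → y₂` are exactly the two halves of a simple path
`x₁ → y₂` through the added edge `(y₁, x₂)`, cut at that edge: neither half can use the added edge
itself, since one of its endpoints lies on the other half. A simple `s`–`t` path in the
augmented graph visits `s` and `t` only at its ends, so it is `s`, then a simple path in `D` plus
the edge, then `t`; the edges `(s, x₁)` and `(y₂, t)` say that this middle path runs from `x₁`
to `y₂`.
-/

section EdgeOn

variable {α : Type*} {a b c : α} {l l₁ l₂ : List α}

@[simp]
theorem not_edgeOn_nil : ¬ EdgeOn a b [] := by
  simp [EdgeOn]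

@[simp]
theorem not_edgeOn_singleton : ¬ EdgeOn a b [c] := by
  simp [EdgeOn]

theorem edgeOn_cons : EdgeOn a b (c :: l) ↔ (c = a ∧ l.head? = some b) ∨ EdgeOn a b l := by
  cases l <;> simp [EdgeOn, eq_comm]

theorem EdgeOn.left_mem (h : EdgeOn a b l) : a ∈ l :=
  List.of_mem_zip h |>.1

theorem EdgeOn.right_mem (h : EdgeOn a b l) : b ∈ l :=
  List.mem_of_mem_tail (List.of_mem_zip h).2

theorem not_edgeOn_of_left_not_mem (h : a ∉ l) : ¬ EdgeOn a b l :=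
  fun hab => h hab.left_mem

theorem not_edgeOn_of_right_not_mem (h : b ∉ l) : ¬ EdgeOn a b l :=
  fun hab => h hab.right_mem

theorem edgeOn_append_s19 :
    EdgeOn a b (l₁ ++ l₂) ↔
      EdgeOn a b l₁ ∨ (l₁.getLast? = some a ∧ l₂.head? = some b) ∨ EdgeOn a b l₂ := by
  induction l₁ with
  | nil => simp
  | cons c l₁ ih =>
    cases l₁ <;> simp_all [edgeOn_cons, or_assoc]

theorem edgeOn_map {β : Type*} {f : α → β} (hf : f.Injective) :
    EdgeOn (f a) (f b) (l.map f) ↔ EdgeOn a b l := by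
  induction l with
  | nil => simp
  | cons c l ih => cases l <;> simp_all [edgeOn_cons, hf.eq_iff]

theorem List.isChain_iff_forall_edgeOn {R : α → α → Prop} :
    l.IsChain R ↔ ∀ a b, EdgeOn a b l → R a b := by
  induction l with
  | nil => simp
  | cons c l ih =>
    rw [List.isChain_cons, ih]
    simp only [edgeOn_cons, or_imp, forall_and, and_imp, Option.mem_def]
    exact and_congr_left' ⟨fun h _ _ hc hb => hc ▸ h _ hb, fun h _ => h c _ rfl⟩

theorem EdgeOn.exists_eq_append (h : EdgeOn a b l) : ∃ l₁ l₂, l = l₁ ++ a :: b :: l₂ := by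
  induction l with
  | nil => exact absurd h not_edgeOn_nil
  | cons c l ih =>
    rcases edgeOn_cons.mp h with ⟨rfl, hb⟩ | h
    · obtain ⟨l₂, rfl⟩ := List.head?_eq_some_iff.mp hb
      exact ⟨[], l₂, rfl⟩
    · obtain ⟨l₁, l₂, rfl⟩ := ih h
      exact ⟨c :: l₁, l₂, rfl⟩

end EdgeOn

section Paths

variable {α : Type*} {R S : α → α → Prop} {p q : List α} {x y y' z : α}

theorem isDiPath_iff_s19 : IsDiPath R p ↔ p.IsChain R ∧ p.Nodup := Iff.rfl

theorem PathFrom.mono_s19 (hRS : ∀ a b, R a b → S a b) (h : PathFrom R p x y) : PathFrom S p x y :=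
  ⟨⟨List.IsChain.imp (fun a b => hRS a b) h.1.1, h.1.2⟩, h.2⟩

theorem pathFrom_append_iff (hy : p.getLast? = some y) (hy' : q.head? = some y') :
    PathFrom R (p ++ q) x z ↔
      PathFrom R p x y ∧ PathFrom R q y' z ∧ R y y' ∧ ∀ v ∈ p, v ∉ q := by
  have hp : p ≠ [] := by rintro rfl; simp at hy
  have hq : q ≠ [] := by rintro rfl; simp at hy'
  simp only [PathFrom, isDiPath_iff_s19, List.isChain_append, List.nodup_append,
    List.head?_append_of_ne_nil _ hp, List.getLast?_append_of_ne_nil _ hq, hy, hy']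
  grind

theorem List.IsChain.of_sup_edge {a b : α} {l : List α}
    (h : l.IsChain fun v w => R v w ∨ (v = a ∧ w = b)) (hab : a ∉ l ∨ b ∉ l) : l.IsChain R := by
  rw [List.isChain_iff_forall_edgeOn] at h ⊢
  intro v w hvw
  refine (h v w hvw).resolve_right ?_
  rintro ⟨rfl, rfl⟩
  exact hab.elim (· hvw.left_mem) (· hvw.right_mem)

theorem exists_disjoint_paths_iff_exists_pathFrom_edgeOn {x₁ y₁ x₂ y₂ : α} :
    (∃ p q, PathFrom R p x₁ y₁ ∧ PathFrom R q x₂ y₂ ∧ ∀ v ∈ p, v ∉ q) ↔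
      ∃ u, PathFrom (fun v w => R v w ∨ (v = y₁ ∧ w = x₂)) u x₁ y₂ ∧ EdgeOn y₁ x₂ u := by
  constructor
  · rintro ⟨p, q, hp, hq, hpq⟩
    refine ⟨p ++ q, ?_, edgeOn_append_s19.mpr (Or.inr (Or.inl ⟨hp.2.2, hq.2.1⟩))⟩
    exact (pathFrom_append_iff hp.2.2 hq.2.1).mpr
      ⟨hp.mono_s19 fun _ _ => Or.inl, hq.mono_s19 fun _ _ => Or.inl, Or.inr ⟨rfl, rfl⟩, hpq⟩
  · rintro ⟨u, hu, hedge⟩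
    obtain ⟨l₁, l₂, rfl⟩ := hedge.exists_eq_append
    rw [show l₁ ++ y₁ :: x₂ :: l₂ = (l₁ ++ [y₁]) ++ x₂ :: l₂ by simp] at hu
    obtain ⟨hp, hq, -, hpq⟩ := (pathFrom_append_iff (y := y₁) (y' := x₂) (by simp) rfl).mp hu
    have hx₂ : x₂ ∉ l₁ ++ [y₁] := fun h => hpq _ h List.mem_cons_self
    have hy₁ : y₁ ∉ x₂ :: l₂ := hpq _ (by simp)
    exact ⟨_, _, ⟨⟨hp.1.1.of_sup_edge (Or.inr hx₂), hp.1.2⟩, hp.2⟩,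
      ⟨⟨hq.1.1.of_sup_edge (Or.inl hy₁), hq.1.2⟩, hq.2⟩, hpq⟩

end Paths

section Terminals

variable {R : V → V → Prop}

def addTerminals (R : V → V → Prop) (u v : V ⊕ Bool) : Prop :=
  (∃ w, u = Sum.inr false ∧ v = Sum.inl w) ∨
  (∃ w, u = Sum.inl w ∧ v = Sum.inr true) ∨
  (∃ w z, u = Sum.inl w ∧ v = Sum.inl z ∧ R w z)

def terminalPath (u : List V) : List (V ⊕ Bool) :=
  Sum.inr false :: (u.map Sum.inl ++ [Sum.inr true])

theorem List.exists_eq_map_inl {β : Type*} {l : List (V ⊕ β)} (h : ∀ v ∈ l, v.isLeft) :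
    ∃ u : List V, l = u.map Sum.inl := by
  induction l with
  | nil => exact ⟨[], rfl⟩
  | cons v l ih =>
    obtain ⟨u, rfl⟩ := ih fun w hw => h w (List.mem_cons_of_mem _ hw)
    obtain ⟨a, rfl⟩ := Sum.isLeft_iff.mp (h v List.mem_cons_self)
    exact ⟨a :: u, rfl⟩

theorem PathFrom.exists_eq_terminalPath {r : List (V ⊕ Bool)}
    (h : PathFrom (addTerminals R) r (Sum.inr false) (Sum.inr true)) :
    ∃ u, r = terminalPath u := by
  obtain ⟨⟨-, hnd⟩, hs, ht⟩ := h
  obtain ⟨r', rfl⟩ := List.getLast?_eq_some_iff.mp ht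
  obtain ⟨m, rfl⟩ : ∃ m, r' = Sum.inr false :: m := by
    cases r' with
    | nil => simp at hs
    | cons v m => simp_all
  have hm : ∀ v ∈ m, v.isLeft := by
    intro v hv
    rcases v with w | _ | _
    · rfl
    · exact absurd (List.mem_append_left _ hv) (List.nodup_cons.mp hnd).1
    · simp_all [List.nodup_append]
  obtain ⟨u, rfl⟩ := List.exists_eq_map_inl hm
  exact ⟨u, rfl⟩

theorem isDiPath_terminalPath {u : List V} :
    IsDiPath (addTerminals R) (terminalPath u) ↔ u ≠ [] ∧ IsDiPath R u := by
  have hsource : (∀ v ∈ (u.map Sum.inl ++ [Sum.inr true]).head?,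
      addTerminals R (Sum.inr false) v) ↔ u ≠ [] := by
    cases u <;> simp [addTerminals]
  simp only [isDiPath_iff_s19, terminalPath, List.isChain_cons, hsource, List.isChain_append,
    List.isChain_map, List.nodup_cons, List.nodup_append, List.nodup_map_iff Sum.inl_injective]
  simp [addTerminals, and_assoc]

theorem edgeOn_terminalPath_source {u : List V} {x : V} :
    EdgeOn (Sum.inr false) (Sum.inl x) (terminalPath u) ↔ u.head? = some x := by
  rw [terminalPath, edgeOn_cons, or_iff_left (not_edgeOn_of_left_not_mem (by simp))]
  cases u <;> simp

theorem edgeOn_terminalPath_inl {u : List V} {a b : V} :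
    EdgeOn (Sum.inl a) (Sum.inl b) (terminalPath u) ↔ EdgeOn a b u := by
  simp [terminalPath, edgeOn_cons, edgeOn_append_s19, edgeOn_map Sum.inl_injective]

theorem edgeOn_terminalPath_sink {u : List V} {y : V} :
    EdgeOn (Sum.inl y) (Sum.inr true) (terminalPath u) ↔ u.getLast? = some y := by
  rw [terminalPath, ← List.cons_append, edgeOn_append_s19,
    or_iff_right (not_edgeOn_of_right_not_mem (by simp))]
  cases h : u.getLast? <;> simp [List.getLast?_cons, h]

theorem serial_addTerminals_iff {x a b y : V} :
    Serial (addTerminals R) (Sum.inr false) (Sum.inr true)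
        {(Sum.inr false, Sum.inl x), (Sum.inl a, Sum.inl b), (Sum.inl y, Sum.inr true)} ↔
      ∃ u, PathFrom R u x y ∧ EdgeOn a b u := by
  simp only [Serial, Set.mem_insert_iff, Set.mem_singleton_iff, forall_eq_or_imp, forall_eq]
  constructor
  · rintro ⟨r, hr, hsource, hab, hsink⟩
    obtain ⟨u, rfl⟩ := hr.exists_eq_terminalPath
    exact ⟨u, ⟨(isDiPath_terminalPath.mp hr.1).2, edgeOn_terminalPath_source.mp hsource,
      edgeOn_terminalPath_sink.mp hsink⟩, edgeOn_terminalPath_inl.mp hab⟩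
  · rintro ⟨u, ⟨hu, hx, hy⟩, hab⟩
    have hne : u ≠ [] := by rintro rfl; simp at hx
    have hlast : (terminalPath u).getLast? = some (Sum.inr true) := by
      simp [terminalPath, List.getLast?_cons]
    exact ⟨terminalPath u, ⟨isDiPath_terminalPath.mpr ⟨hne, hu⟩, rfl, hlast⟩,
      edgeOn_terminalPath_source.mpr hx, edgeOn_terminalPath_inl.mpr hab,
      edgeOn_terminalPath_sink.mpr hy⟩

end Terminals

theorem stmt19_general {V : Type*} (D : V → V → Prop) (x₁ y₁ x₂ y₂ : V) :
    let E : (V ⊕ Bool) → (V ⊕ Bool) → Prop := fun u v =>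
      (∃ w, u = Sum.inr false ∧ v = Sum.inl w) ∨
      (∃ w, u = Sum.inl w ∧ v = Sum.inr true) ∨
      (∃ w z, u = Sum.inl w ∧ v = Sum.inl z ∧ (D w z ∨ (w = y₁ ∧ z = x₂)))
    ((∃ p q : List V, PathFrom D p x₁ y₁ ∧ PathFrom D q x₂ y₂ ∧ ∀ v ∈ p, v ∉ q) ↔
      Serial E (Sum.inr false) (Sum.inr true)
        {(Sum.inr false, Sum.inl x₁), (Sum.inl y₁, Sum.inl x₂),
          (Sum.inl y₂, Sum.inr true)}) :=
  exists_disjoint_paths_iff_exists_pathFrom_edgeOn.trans serial_addTerminals_iff.symm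

/-- The reduction from 2-vertex-disjoint-paths to seriality: vertex-disjoint paths
`x₁–y₁` and `x₂–y₂` exist in `D` iff in the augmented 2-terminal graph (new source
`s` with edges to all vertices, new target `t` with edges from all vertices, and
the extra edge `(y₁,x₂)`) the set `{(s,x₁),(y₁,x₂),(y₂,t)}` is serial. -/
theorem stmt19 {V : Type*} (D : V → V → Prop) (x₁ y₁ x₂ y₂ : V)
    (hd : [x₁, y₁, x₂, y₂].Nodup) :
    let E : (V ⊕ Bool) → (V ⊕ Bool) → Prop := fun u v =>
      (∃ w, u = Sum.inr false ∧ v = Sum.inl w) ∨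
      (∃ w, u = Sum.inl w ∧ v = Sum.inr true) ∨
      (∃ w z, u = Sum.inl w ∧ v = Sum.inl z ∧ (D w z ∨ (w = y₁ ∧ z = x₂)))
    ((∃ p q : List V, PathFrom D p x₁ y₁ ∧ PathFrom D q x₂ y₂ ∧ ∀ v ∈ p, v ∉ q) ↔
      Serial E (Sum.inr false) (Sum.inr true)
        {(Sum.inr false, Sum.inl x₁), (Sum.inl y₁, Sum.inl x₂),
          (Sum.inl y₂, Sum.inr true)}) :=
  stmt19_general D x₁ y₁ x₂ y₂
end
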